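/- Let d ≥ 1 and k = (k_1,…,k_d) positive integers, and let (𝓐_n)_{n≥0} be an interval filtration on a d-dimensional rectangle I. For each n, let 𝒞_n be the collection of all sets B = B^1 × ⋯ × B^d such that for every direction δ, B^δ is a union of at least one and at most 3k_δ consecutive atoms of 𝓐_n^δ; set 𝒞 = ∪_{n≥0} 𝒞_n. Let f ∈ L^1(I) and λ > 0, and let ℰ be the family of all E ∈ 𝒞 such that |E|^{−1} ∫_E |f| > λ while |Ẽ|^{−1} ∫_{Ẽ} |f| ≤ λ for every Ẽ ∈ 𝒞 with Ẽ ⊋ E. Then Σ_{E∈ℰ} 1_E(t) ≤ C for every t ∈ I, where the constant C depends only on k and d (one may take C = Π_{δ=1}^d (3k_δ)²). -/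
import Mathlib


open MeasureTheory Set

structure IntervalPartition where
  a : ℝ
  b : ℝ
  m : ℕ
  m_pos : 0 < m
  t : Fin (m + 1) → ℝ
  t_mono : StrictMono t
  t_first : t 0 = a
  t_last : t (Fin.last m) = b

namespace IntervalPartition

/-- The `i`-th breakpoint of the partition (extended to all of `ℕ`). -/
def pt (P : IntervalPartition) (i : ℕ) : ℝ :=
  P.t ⟨min i P.m, Nat.lt_succ_of_le (min_le_right _ _)⟩

/-- The underlying interval `[a, b)`. -/
def interval (P : IntervalPartition) : Set ℝ := Set.Ico P.a P.b

/-- The `i`-th atom of the partition, `[t_i, t_{i+1})`. -/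
def atomN (P : IntervalPartition) (i : ℕ) : Set ℝ := Set.Ico (P.pt i) (P.pt (i + 1))

/-- The length of the `i`-th atom. -/
def atomLen (P : IntervalPartition) (i : ℕ) : ℝ := P.pt (i + 1) - P.pt i

/-- Membership in the spline space `S_k(𝓕)`:  `(k-2)`-times continuously differentiable
on the interval and a polynomial of degree at most `k - 1` on each atom. -/
def IsSpline (k : ℕ) (P : IntervalPartition) (f : ℝ → ℝ) : Prop :=
  (2 ≤ k → ContDiffOn ℝ (k - 2 : ℕ) f P.interval) ∧
  ∀ i < P.m, ∃ p : Polynomial ℝ, p.natDegree ≤ k - 1 ∧ ∀ x ∈ P.atomN i, f x = p.eval x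

/-- `P.Refines Q` : `Q` is finer than `P` (same interval, more breakpoints). -/
def Refines (P Q : IntervalPartition) : Prop :=
  P.a = Q.a ∧ P.b = Q.b ∧ Set.range P.t ⊆ Set.range Q.t

/-- The pair `(i, j)` describes a B-spline support of order `r`:
the union of the consecutive atoms `i, …, j`, where either `j - i + 1 = r`, or
`j - i + 1 < r` and the union touches an endpoint of the interval. -/
def IsBSupportIdx (P : IntervalPartition) (r i j : ℕ) : Prop :=
  i ≤ j ∧ j < P.m ∧ (j + 1 - i = r ∨ (j + 1 - i < r ∧ (i = 0 ∨ j = P.m - 1)))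

/-- The B-spline support as a set. -/
def bSupportSet (P : IntervalPartition) (i j : ℕ) : Set ℝ := Set.Ico (P.pt i) (P.pt (j + 1))

/-- The length of a B-spline support. -/
def bSupportLen (P : IntervalPartition) (i j : ℕ) : ℝ := P.pt (j + 1) - P.pt i

/-- `k`-regularity with parameter `γ` of a single interval σ-algebra: any two B-spline
supports of order `k` at Euclidean distance zero have comparable lengths. -/
def KRegular (P : IntervalPartition) (k : ℕ) (γ : ℝ) : Prop :=
  ∀ i j i' j' : ℕ, P.IsBSupportIdx k i j → P.IsBSupportIdx k i' j' →
    P.pt i' ≤ P.pt (j + 1) → P.pt i ≤ P.pt (j' + 1) →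
    P.bSupportLen i j ≤ γ * P.bSupportLen i' j'

-- The index of the atom containing `x` (junk value if there is none).
open Classical in
noncomputable def idx (P : IntervalPartition) (x : ℝ) : ℕ :=
  if h : ∃ i, i < P.m ∧ x ∈ P.atomN i then h.choose else 0

end IntervalPartition

/-- The `d`-dimensional rectangle underlying a product of interval σ-algebras. -/
def rect {d : ℕ} (P : Fin d → IntervalPartition) : Set (Fin d → ℝ) :=
  Set.univ.pi fun δ => (P δ).interval

/-- The atom of the product σ-algebra with index vector `i`. -/
def prodAtomN {d : ℕ} (P : Fin d → IntervalPartition) (i : Fin d → ℕ) : Set (Fin d → ℝ) :=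
  Set.univ.pi fun δ => (P δ).atomN (i δ)

/-- `|d(A,B)|₁` for atoms with index vectors `i`, `j`. -/
def dist1 {d : ℕ} (i j : Fin d → ℕ) : ℕ := ∑ δ, ((i δ : ℤ) - (j δ : ℤ)).natAbs

/-- The volume of `conv(A, B)`, the smallest axis-parallel rectangle containing the
atoms with index vectors `i` and `j`. -/
def convVol {d : ℕ} (P : Fin d → IntervalPartition) (i j : Fin d → ℕ) : ℝ :=
  ∏ δ, ((P δ).pt (max (i δ) (j δ) + 1) - (P δ).pt (min (i δ) (j δ)))

/-- The kernel sum `Σ_A q^{|d(A, A_ix)|₁} / |conv(A, A_ix)| ∫_A |f|`. -/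
noncomputable def kern {d : ℕ} (P : Fin d → IntervalPartition) (q : ℝ)
    (f : (Fin d → ℝ) → ℝ) (ix : Fin d → ℕ) : ℝ :=
  ∑ ia : (∀ δ, Fin ((P δ).m)),
    q ^ dist1 (fun δ => (ia δ : ℕ)) ix / convVol P (fun δ => (ia δ : ℕ)) ix *
      ∫ y in prodAtomN P (fun δ => (ia δ : ℕ)), |f y|

/-- Coordinatewise `k`-regularity with parameter `γ` of a multivariate filtration. -/
def KRegularAll (d : ℕ) (F : ℕ → Fin d → IntervalPartition) (k : Fin d → ℕ) (γ : ℝ) : Prop :=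
  ∀ n δ, (F n δ).KRegular (k δ) γ

/-- Direction `r`-regularity with parameter `β`: there is no direction `δ`, no
monotone sequence of times `n 0 ≤ n 1 ≤ …`, no strictly decreasing chain of atoms
`prodAtomN (F (n 0)) (ix 0) ⊋ … ⊋ prodAtomN (F (n (β-1))) (ix (β-1))` and no B-spline
support `B` of order `r δ` in the `δ`-th coordinate of `F (n 0)` containing the `δ`-th
component of the first atom such that `B` is still a B-spline support of order `r δ`
in the `δ`-th coordinate of `F (n (β-1))`. -/
def DirRegular (d : ℕ) (F : ℕ → Fin d → IntervalPartition) (r : Fin d → ℕ) (β : ℕ) : Prop :=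
  ¬ ∃ (δ : Fin d) (n : ℕ → ℕ) (ix : ℕ → Fin d → ℕ) (i j : ℕ),
      (∀ l l', l ≤ l' → n l ≤ n l') ∧
      (∀ l, l < β → ∀ δ', ix l δ' < (F (n l) δ').m) ∧
      (∀ l l', l < l' → l' < β →
        prodAtomN (F (n l')) (ix l') ⊂ prodAtomN (F (n l)) (ix l)) ∧
      (F (n 0) δ).IsBSupportIdx (r δ) i j ∧
      (F (n 0) δ).atomN (ix 0 δ) ⊆ (F (n 0) δ).bSupportSet i j ∧
      ∃ i' j', (F (n (β - 1)) δ).IsBSupportIdx (r δ) i' j' ∧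
        (F (n (β - 1)) δ).bSupportSet i' j' = (F (n 0) δ).bSupportSet i j

/-- The tensor product spline space: the linear span of products of coordinate splines. -/
def TensorSplineSpan (d : ℕ) (k : Fin d → ℕ) (P : Fin d → IntervalPartition) :
    Submodule ℝ ((Fin d → ℝ) → ℝ) :=
  Submodule.span ℝ {G : (Fin d → ℝ) → ℝ |
    ∃ g : Fin d → ℝ → ℝ, (∀ δ, IntervalPartition.IsSpline (k δ) (P δ) (g δ)) ∧
      G = fun x => ∏ δ, g δ (x δ)}

/-- `g` is the orthogonal projection (in `L²` of the rectangle) of `f` onto the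
tensor product spline space. -/
def IsProj (d : ℕ) (k : Fin d → ℕ) (P : Fin d → IntervalPartition)
    (f g : (Fin d → ℝ) → ℝ) : Prop :=
  g ∈ TensorSplineSpan d k P ∧ ∀ h ∈ TensorSplineSpan d k P,
    ∫ x in rect P, g x * h x = ∫ x in rect P, f x * h x

/-- A multivariate interval filtration in standard form: it starts from the trivial
σ-algebra and at each step exactly one atom of exactly one coordinate σ-algebra is
split into two. -/
def StandardForm (d : ℕ) (F : ℕ → Fin d → IntervalPartition) : Prop :=
  (∀ δ, (F 0 δ).m = 1) ∧
  ∀ n, ∃ δ₀, (∀ δ, δ ≠ δ₀ → F (n + 1) δ = F n δ) ∧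
    (F n δ₀).Refines (F (n + 1) δ₀) ∧ (F (n + 1) δ₀).m = (F n δ₀).m + 1


/-- The collection `𝒞_n`: products `B = B¹ × ⋯ × B^d` where each `B^δ` is a union of at
least one and at most `3 k_δ` consecutive atoms of the `δ`-th coordinate σ-algebra. -/
def CnFam (d : ℕ) (k : Fin d → ℕ) (P : Fin d → IntervalPartition) :
    Set (Set (Fin d → ℝ)) :=
  {B | ∃ i l : Fin d → ℕ,
    (∀ δ, 1 ≤ l δ ∧ l δ ≤ 3 * k δ ∧ i δ + l δ ≤ (P δ).m) ∧
    B = Set.univ.pi fun δ => Set.Ico ((P δ).pt (i δ)) ((P δ).pt (i δ + l δ))}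

/-- The family `ℰ` of maximal sets in `𝒞 = ⋃_n 𝒞_n` whose average of `|f|` exceeds `λ`,
that contain the point `t`. -/
def MaximalFam (d : ℕ) (k : Fin d → ℕ) (F : ℕ → Fin d → IntervalPartition)
    (f : (Fin d → ℝ) → ℝ) (lam : ℝ) (t : Fin d → ℝ) : Set (Set (Fin d → ℝ)) :=
  {E | E ∈ ⋃ n, CnFam d k (F n) ∧
    lam < (volume E).toReal⁻¹ * ∫ y in E, |f y| ∧
    (∀ E' ∈ ⋃ n, CnFam d k (F n), E ⊂ E' →
      (volume E').toReal⁻¹ * ∫ y in E', |f y| ≤ lam) ∧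
    t ∈ E}

namespace IntervalPartition

lemma pt_mono' (P : IntervalPartition) : Monotone P.pt := by
  intro i j hij
  exact P.t_mono.monotone (by simp only [Fin.mk_le_mk]; omega)

lemma pt_lt_pt' (P : IntervalPartition) {i j : ℕ} (hij : i < j) (hj : j ≤ P.m) :
    P.pt i < P.pt j :=
  P.t_mono (by simp only [Fin.mk_lt_mk]; omega)

lemma pt_val' (Q : IntervalPartition) (jf : Fin (Q.m + 1)) : Q.pt jf.1 = Q.t jf :=
  congrArg Q.t (Fin.ext (min_eq_left (Nat.lt_succ_iff.mp jf.2)))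

lemma exists_atom' (P : IntervalPartition) :
    ∀ (l i : ℕ) (x : ℝ), P.pt i ≤ x → x < P.pt (i + l) →
      ∃ a, i ≤ a ∧ a < i + l ∧ P.pt a ≤ x ∧ x < P.pt (a + 1) := by
  intro l
  induction l with
  | zero => intro i x h1 h2; simp only [Nat.add_zero] at h2; linarith
  | succ l ih =>
    intro i x h1 h2
    by_cases hc : x < P.pt (i + 1)
    · exact ⟨i, le_refl _, by omega, h1, hc⟩
    · obtain ⟨a, h3, h4, h5, h6⟩ := ih (i + 1) x (not_lt.1 hc)
        (by rw [show i + 1 + l = i + (l + 1) by omega]; exact h2)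
      exact ⟨a, by omega, by omega, h5, h6⟩

lemma Refines.refl' (P : IntervalPartition) : P.Refines P := ⟨rfl, rfl, subset_rfl⟩

lemma Refines.trans' {P Q R : IntervalPartition} (h1 : P.Refines Q) (h2 : Q.Refines R) :
    P.Refines R := ⟨h1.1.trans h2.1, h1.2.1.trans h2.2.1, h1.2.2.trans h2.2.2⟩

lemma exists_refines_map {P Q : IntervalPartition} (h : P.Refines Q) :
    ∃ ψ : ℕ → ℕ, (∀ j, j ≤ P.m → ψ j ≤ Q.m ∧ Q.pt (ψ j) = P.pt j) ∧
      ∀ j s, j + s ≤ P.m → ψ j + s ≤ ψ (j + s) := by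
  have key : ∀ j, ∃ jf, j ≤ P.m → jf ≤ Q.m ∧ Q.pt jf = P.pt j := by
    intro j
    by_cases hj : j ≤ P.m
    · have hmem : P.pt j ∈ Set.range Q.t :=
        h.2.2 ⟨⟨min j P.m, Nat.lt_succ_of_le (min_le_right _ _)⟩, rfl⟩
      obtain ⟨jf, hjf⟩ := hmem
      exact ⟨jf.1, fun _ => ⟨Nat.lt_succ_iff.mp jf.2, by rw [Q.pt_val' jf, hjf]⟩⟩
    · exact ⟨0, fun hc => absurd hc hj⟩
  choose ψ hψ using key
  refine ⟨ψ, hψ, ?_⟩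
  have hstep : ∀ j, j + 1 ≤ P.m → ψ j + 1 ≤ ψ (j + 1) := by
    intro j hj
    have hlt : Q.pt (ψ j) < Q.pt (ψ (j + 1)) := by
      rw [(hψ j (by omega)).2, (hψ (j + 1) hj).2]
      exact P.pt_lt_pt' (Nat.lt_succ_self j) hj
    by_contra hc
    have : Q.pt (ψ (j + 1)) ≤ Q.pt (ψ j) := Q.pt_mono' (by omega)
    linarith
  intro j s
  induction s with
  | zero => intro _; simp
  | succ s ih =>
    intro hs
    have h1 := ih (by omega)
    have h2 := hstep (j + s) (by omega)
    show ψ j + (s + 1) ≤ ψ (j + s + 1)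
    omega

lemma subset_of_pattern (P Q : IntervalPartition) (h : P.Refines Q)
    (i l a i' a' : ℕ) (x : ℝ)
    (hil : i + l ≤ P.m)
    (ha1 : i ≤ a) (ha2 : a < i + l)
    (hx1 : P.pt a ≤ x) (hx2 : x < P.pt (a + 1))
    (hb1 : i' ≤ a') (hb2 : a' < i' + l)
    (hy1 : Q.pt a' ≤ x) (hy2 : x < Q.pt (a' + 1))
    (hpat : a - i = a' - i') :
    Set.Ico (Q.pt i') (Q.pt (i' + l)) ⊆ Set.Ico (P.pt i) (P.pt (i + l)) := by
  obtain ⟨ψ, hψ, hadd⟩ := exists_refines_map h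
  have e_i : Q.pt (ψ i) = P.pt i := (hψ i (by omega)).2
  have e_a : Q.pt (ψ a) = P.pt a := (hψ a (by omega)).2
  have e_a1 : Q.pt (ψ (a + 1)) = P.pt (a + 1) := (hψ (a + 1) (by omega)).2
  have e_il : Q.pt (ψ (i + l)) = P.pt (i + l) := (hψ (i + l) (by omega)).2
  have h1 : ψ a ≤ a' := by
    by_contra hc
    have : Q.pt (a' + 1) ≤ Q.pt (ψ a) := Q.pt_mono' (by omega)
    rw [e_a] at this; linarith
  have h2 : a' + 1 ≤ ψ (a + 1) := by
    by_contra hc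
    have : Q.pt (ψ (a + 1)) ≤ Q.pt a' := Q.pt_mono' (by omega)
    rw [e_a1] at this; linarith
  have h3 : ψ i + (a - i) ≤ ψ a := by
    have hh := hadd i (a - i) (by omega)
    rwa [show i + (a - i) = a by omega] at hh
  have h4 : ψ (a + 1) + (i + l - (a + 1)) ≤ ψ (i + l) := by
    have hh := hadd (a + 1) (i + l - (a + 1)) (by omega)
    rwa [show a + 1 + (i + l - (a + 1)) = i + l by omega] at hh
  have hL : P.pt i ≤ Q.pt i' := by
    rw [← e_i]; exact Q.pt_mono' (by omega)
  have hR : Q.pt (i' + l) ≤ P.pt (i + l) := by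
    rw [← e_il]; exact Q.pt_mono' (by omega)
  exact Set.Ico_subset_Ico hL hR

end IntervalPartition

lemma refines_of_le' {d : ℕ} (F : ℕ → Fin d → IntervalPartition)
    (hF : ∀ n δ, (F n δ).Refines (F (n + 1) δ)) (δ : Fin d) {n n' : ℕ} (h : n ≤ n') :
    (F n δ).Refines (F n' δ) := by
  induction n', h using Nat.le_induction with
  | base => exact IntervalPartition.Refines.refl' _
  | succ m hm ih => exact ih.trans' (hF m δ)

/-- **Bounded overlap of the maximal sets (eq. 5.4).** For an interval filtration
`(𝓐_n)` on a `d`-dimensional rectangle, every `f ∈ L¹` and `λ > 0`, the distinct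
maximal elements `E` of `𝒞` with average of `|f|` exceeding `λ` overlap at each point at
most `Π_δ (3 k_δ)²` times. -/
theorem bounded_overlap (d : ℕ) (hd : 1 ≤ d) (k : Fin d → ℕ) (hk : ∀ δ, 1 ≤ k δ)
    (F : ℕ → Fin d → IntervalPartition) (hF : ∀ n δ, (F n δ).Refines (F (n + 1) δ))
    (f : (Fin d → ℝ) → ℝ) (hf : IntegrableOn f (rect (F 0)))
    (lam : ℝ) (hlam : 0 < lam) (t : Fin d → ℝ) :
    (MaximalFam d k F f lam t).Finite ∧
      (MaximalFam d k F f lam t).ncard ≤ ∏ δ, (3 * k δ) ^ 2 := by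
  classical
  set S := MaximalFam d k F f lam t with hS
  have hdata : ∀ E : S, ∃ (n : ℕ) (i l a : Fin d → ℕ),
      ((E : Set (Fin d → ℝ)) =
        Set.univ.pi fun δ => Set.Ico ((F n δ).pt (i δ)) ((F n δ).pt (i δ + l δ))) ∧
      (∀ δ, 1 ≤ l δ ∧ l δ ≤ 3 * k δ ∧ i δ + l δ ≤ (F n δ).m) ∧
      (∀ δ, i δ ≤ a δ ∧ a δ < i δ + l δ ∧
        (F n δ).pt (a δ) ≤ t δ ∧ t δ < (F n δ).pt (a δ + 1)) := by
    rintro ⟨E, hE⟩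
    obtain ⟨hmem, havg, hmax, ht⟩ := hE
    rw [Set.mem_iUnion] at hmem
    obtain ⟨nn, hmem⟩ := hmem
    obtain ⟨ii, ll, hb, hEeq⟩ := hmem
    have ht' : ∀ δ, t δ ∈ Set.Ico ((F nn δ).pt (ii δ)) ((F nn δ).pt (ii δ + ll δ)) := by
      intro δ
      have := hEeq ▸ ht
      exact (Set.mem_univ_pi.mp this) δ
    have hta : ∀ δ, ∃ aa, ii δ ≤ aa ∧ aa < ii δ + ll δ ∧
        (F nn δ).pt aa ≤ t δ ∧ t δ < (F nn δ).pt (aa + 1) := by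
      intro δ
      exact (F nn δ).exists_atom' (ll δ) (ii δ) (t δ) (ht' δ).1 (ht' δ).2
    choose aa haa using hta
    exact ⟨nn, ii, ll, aa, hEeq, hb, haa⟩
  choose n i l a hEeq hbound hatom using hdata
  set β := ∀ δ : Fin d, Fin (3 * k δ) × Fin (3 * k δ) with hβ
  have henc : ∀ (E : S) (δ : Fin d), l E δ - 1 < 3 * k δ ∧ a E δ - i E δ < 3 * k δ := by
    intro E δ
    have h1 := hbound E δ
    have h2 := hatom E δ
    exact ⟨by omega, by omega⟩
  let enc : S → β := fun E δ =>
    (⟨l E δ - 1, (henc E δ).1⟩, ⟨a E δ - i E δ, (henc E δ).2⟩)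
  have key : ∀ A B : S, n A ≤ n B → (∀ δ, l A δ = l B δ) →
      (∀ δ, a A δ - i A δ = a B δ - i B δ) →
      (B : Set (Fin d → ℝ)) ⊆ (A : Set (Fin d → ℝ)) := by
    intro A B hn hlAB hpAB
    rw [hEeq A, hEeq B]
    refine Set.pi_mono fun δ _ => ?_
    have hbA := hbound A δ
    have hbB := hbound B δ
    have haA := hatom A δ
    have haB := hatom B δ
    have href := refines_of_le' F hF δ hn
    have hlδ := hlAB δ
    rw [show i B δ + l B δ = i B δ + l A δ by rw [hlAB δ]]
    exact IntervalPartition.subset_of_pattern (F (n A) δ) (F (n B) δ) href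
      (i A δ) (l A δ) (a A δ) (i B δ) (a B δ) (t δ)
      hbA.2.2 haA.1 haA.2.1 haA.2.2.1 haA.2.2.2
      haB.1 (by omega) haB.2.2.1 haB.2.2.2 (hpAB δ)
  have main : ∀ A B : S, n A ≤ n B → (∀ δ, l A δ = l B δ) →
      (∀ δ, a A δ - i A δ = a B δ - i B δ) → A = B := by
    intro A B hn h1 h2
    have hsub := key A B hn h1 h2
    by_contra hne
    have hss : (B : Set (Fin d → ℝ)) ⊂ (A : Set (Fin d → ℝ)) :=
      hsub.ssubset_of_ne (fun hEq => hne (Subtype.ext hEq.symm))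
    obtain ⟨hmemB, havgB, hmaxB, htB⟩ := B.2
    obtain ⟨hmemA, havgA, hmaxA, htA⟩ := A.2
    have := hmaxB _ hmemA hss
    linarith
  have hinj : Function.Injective enc := by
    intro E₁ E₂ hEq
    have hl : ∀ δ, l E₁ δ = l E₂ δ := by
      intro δ
      have h0 := congrFun hEq δ
      have hfst : l E₁ δ - 1 = l E₂ δ - 1 :=
        congrArg Fin.val (congrArg Prod.fst h0)
      have h1 := (hbound E₁ δ).1
      have h2 := (hbound E₂ δ).1
      omega
    have hp : ∀ δ, a E₁ δ - i E₁ δ = a E₂ δ - i E₂ δ := by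
      intro δ
      have h0 := congrFun hEq δ
      exact congrArg Fin.val (congrArg Prod.snd h0)
    rcases le_total (n E₁) (n E₂) with h | h
    · exact main E₁ E₂ h hl hp
    · exact (main E₂ E₁ h (fun δ => (hl δ).symm) (fun δ => (hp δ).symm)).symm
  have hfin : Finite S := Finite.of_injective enc hinj
  refine ⟨Set.finite_coe_iff.mp hfin, ?_⟩
  calc S.ncard = Nat.card S := (Nat.card_coe_set_eq S).symm
    _ ≤ Nat.card β := Nat.card_le_card_of_injective enc hinj
    _ = ∏ δ, (3 * k δ) ^ 2 := by
        simp [hβ, Nat.card_eq_fintype_card, Fintype.card_pi, sq]
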